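/- Let G be the threshold graph with creation sequence (0, 1, 0^{k}, 1), where k ≥ 1. Then q(G) = 3. -/

import Mathlib

open Matrix BigOperators

/-- The threshold graph on `Fin n` given by a creation sequence `b`:
for `i < j`, vertices `i` and `j` are adjacent iff `b j = true`. -/
def ThresholdGraph {n : ℕ} (b : Fin n → Bool) : SimpleGraph (Fin n) where
  Adj i j := i ≠ j ∧ ((i < j ∧ b j = true) ∨ (j < i ∧ b i = true))
  symm := ⟨fun _ _ h => ⟨h.1.symm, h.2.symm⟩⟩
  loopless := ⟨fun _ h => h.1 rfl⟩

/-- The threshold graph whose creation sequence is given by a list of booleans. -/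
def thresholdOfList (L : List Bool) : SimpleGraph (Fin L.length) where
  Adj i j := i ≠ j ∧ ((i < j ∧ L.get j = true) ∨ (j < i ∧ L.get i = true))
  symm := ⟨fun _ _ h => ⟨h.1.symm, h.2.symm⟩⟩
  loopless := ⟨fun _ h => h.1 rfl⟩

/-- `S(G)`: real symmetric matrices whose off-diagonal nonzero pattern is given by `G`. -/
def SMat {n : ℕ} (G : SimpleGraph (Fin n)) : Set (Matrix (Fin n) (Fin n) ℝ) :=
  {A | A.IsSymm ∧ ∀ i j : Fin n, i ≠ j → (A i j ≠ 0 ↔ G.Adj i j)}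

/-- The number of distinct (real) eigenvalues of a matrix. -/
noncomputable def numEig {n : ℕ} (A : Matrix (Fin n) (Fin n) ℝ) : ℕ :=
  (spectrum ℝ A).ncard

/-- `q(G)`: the minimum number of distinct eigenvalues over matrices in `S(G)`. -/
noncomputable def qGraph {n : ℕ} (G : SimpleGraph (Fin n)) : ℕ :=
  sInf (numEig '' SMat G)

/-!
The graph is `K₁ ∨ (K₂ ∪ k K₁)`: vertices `0, 1` form an edge, `2, …, k + 1` are isolated and
`k + 2` is dominating.

Lower bound: a symmetric `B` with at most two eigenvalues `a, b` satisfies `B² = (a + b) B - ab I`,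
so `(B²)ᵢⱼ = 0` for distinct nonadjacent `i, j`; but for `i = 0, j = 2` the only common neighbour
is `k + 2`, so `(B²)ᵢⱼ = Bᵢ,ₖ₊₂ Bₖ₊₂,ⱼ ≠ 0`.

Upper bound: with `v = e₀ - e₁`, `e = eₖ₊₂`, `𝟙` the all-ones vector and `W` the `3 × (k + 3)`
matrix with rows `v, e, 𝟙`, the matrix `A = -v vᵀ + 2 (e 𝟙ᵀ + 𝟙 eᵀ) + (2k - 2) e eᵀ = Wᵀ C W` has
the pattern of the graph, and its nonzero eigenvalues are those of the `3 × 3` matrix `C W Wᵀ`,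
namely `-2` and `2k + 4`.
-/

theorem Set.exists_subset_pair_of_ncard_le_two {α : Type*} [Nonempty α] {s : Set α}
    (hs : s.Finite) (h : s.ncard ≤ 2) : ∃ a b, s ⊆ {a, b} := by
  rcases h.lt_or_eq with h | h
  · obtain ⟨a, ha⟩ := (Set.ncard_le_one_iff_subset_singleton hs).mp (Nat.lt_succ_iff.mp h)
    exact ⟨a, a, ha.trans (by simp)⟩
  · obtain ⟨a, b, -, rfl⟩ := Set.ncard_eq_two.mp h
    exact ⟨a, b, subset_rfl⟩

theorem Matrix.IsHermitian.mul_self_eq_of_spectrum_subset_pair {n 𝕜 : Type*} [RCLike 𝕜]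
    [Fintype n] [DecidableEq n] {B : Matrix n n 𝕜} (hB : B.IsHermitian) {a b : ℝ}
    (h : spectrum ℝ B ⊆ {a, b}) : B * B = (a + b) • B - (a * b) • 1 := by
  have hsa : IsSelfAdjoint B := hB.isSelfAdjoint
  have h0 : cfc (fun x => (x - a) * (x - b)) B = 0 := by
    rw [cfc_congr (g := 0) fun x hx => ?_, cfc_zero]
    rcases h hx with rfl | rfl <;> simp
  rw [cfc_mul .., cfc_sub .., cfc_sub .., cfc_id' .., cfc_const a B, cfc_const b B] at h0
  rw [← sub_eq_zero, ← h0]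
  simp only [Algebra.algebraMap_eq_smul_one, sub_mul, mul_sub, smul_mul_assoc, mul_smul_comm,
    one_mul, mul_one]
  module

theorem Matrix.spectrum_mul_subset_insert_zero {m n K : Type*} [Field K] [Fintype m] [Fintype n]
    [DecidableEq m] [DecidableEq n] (A : Matrix m n K) (B : Matrix n m K) :
    spectrum K (A * B) ⊆ insert 0 (spectrum K (B * A)) := by
  intro r hr
  rcases eq_or_ne r 0 with rfl | hr0
  · exact Set.mem_insert _ _
  refine Set.mem_insert_of_mem _ ?_
  rw [Matrix.mem_spectrum_iff_isRoot_charpoly] at hr ⊢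
  have := congrArg (Polynomial.eval r) (charpoly_mul_comm' A B)
  simp only [Polynomial.eval_mul, Polynomial.eval_pow, Polynomial.eval_X, hr.eq_zero,
    mul_zero] at this
  exact (mul_eq_zero.mp this.symm).resolve_left (pow_ne_zero _ hr0)

theorem three_le_numEig_of_unique_common_neighbor {n : ℕ} {G : SimpleGraph (Fin n)}
    {B : Matrix (Fin n) (Fin n) ℝ} (hB : B ∈ SMat G) {i j l : Fin n} (hij : i ≠ j)
    (hnadj : ¬G.Adj i j) (hil : G.Adj i l) (hlj : G.Adj l j)
    (huniq : ∀ m, G.Adj i m → G.Adj m j → m = l) : 3 ≤ numEig B := by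
  obtain ⟨hsymm, hpat⟩ := hB
  by_contra! hlt
  obtain ⟨a, b, hab⟩ := Set.exists_subset_pair_of_ncard_le_two B.finite_spectrum
    (Nat.lt_succ_iff.mp hlt)
  have hsq := congrFun₂
    ((isHermitian_iff_isSymm.mpr hsymm).mul_self_eq_of_spectrum_subset_pair hab) i j
  have hBij : B i j = 0 := not_not.mp fun h => hnadj ((hpat i j hij).mp h)
  rw [Matrix.sub_apply, Matrix.smul_apply, Matrix.smul_apply, hBij, Matrix.one_apply_ne hij,
    Matrix.mul_apply, Finset.sum_eq_single l] at hsq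
  · exact mul_ne_zero ((hpat _ _ hil.ne).mpr hil) ((hpat _ _ hlj.ne).mpr hlj) (by simpa using hsq)
  · intro m _ hml
    by_contra hne
    obtain ⟨him, hmj⟩ := mul_ne_zero_iff.mp hne
    have him' : i ≠ m := by rintro rfl; exact hmj hBij
    have hmj' : m ≠ j := by rintro rfl; exact him hBij
    exact hml (huniq m ((hpat _ _ him').mp him) ((hpat _ _ hmj').mp hmj))
  · simp

theorem qGraph_eq_of_attained_lower_bound {n q : ℕ} {G : SimpleGraph (Fin n)}
    (hA : ∃ A ∈ SMat G, numEig A ≤ q) (hB : ∀ B ∈ SMat G, q ≤ numEig B) : qGraph G = q := by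
  obtain ⟨A, hAG, hAq⟩ := hA
  have hmem : numEig A ∈ numEig '' SMat G := Set.mem_image_of_mem numEig hAG
  refine le_antisymm ((Nat.sInf_le hmem).trans hAq) (le_csInf ⟨_, hmem⟩ ?_)
  rintro _ ⟨B, hBG, rfl⟩
  exact hB B hBG

section Witness

variable (k : ℕ)

noncomputable def witnessRows : Fin 3 → Fin (k + 3) → ℝ :=
  ![Pi.single 0 1 - Pi.single 1 1, Pi.single (Fin.last _) 1, 1]

/-- The entry `2k - 2` is chosen so that `-2`, the eigenvalue of `A` on `v`, is also an eigenvalue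
of `A` on `span {e, 𝟙}`. -/
noncomputable def witnessCore : Matrix (Fin 3) (Fin 3) ℝ :=
  !![-1, 0, 0; 0, 2 * k - 2, 2; 0, 2, 0]

noncomputable def witnessMatrix : Matrix (Fin (k + 3)) (Fin (k + 3)) ℝ :=
  (of (witnessRows k))ᵀ * (witnessCore k * of (witnessRows k))

lemma witnessRows_mul_transpose :
    of (witnessRows k) * (of (witnessRows k))ᵀ = !![2, 0, 0; 0, 1, 1; 0, 1, (k : ℝ) + 3] := by
  have h1 : Fin.last (k + 2) ≠ 1 := by simp [Fin.ext_iff]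
  have h0 : Fin.last (k + 2) ≠ 0 := Fin.last_pos.ne'
  ext a b
  change witnessRows k a ⬝ᵥ witnessRows k b = _
  fin_cases a <;> fin_cases b <;>
    norm_num [witnessRows, sub_dotProduct, dotProduct_sub, h0, h1]

lemma spectrum_witnessCore_mul_gram :
    spectrum ℝ (witnessCore k * (of (witnessRows k) * (of (witnessRows k))ᵀ)) ⊆
      {-2, 2 * (k : ℝ) + 4} := by
  intro r hr
  have hchar : (witnessCore k * !![2, 0, 0; 0, 1, 1; 0, 1, (k : ℝ) + 3]).charpoly.eval r =
      (r + 2) ^ 2 * (r - (2 * k + 4)) := by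
    rw [Matrix.eval_charpoly, Matrix.det_fin_three]
    simp [witnessCore]
    ring
  rw [witnessRows_mul_transpose, Matrix.mem_spectrum_iff_isRoot_charpoly, Polynomial.IsRoot,
    hchar] at hr
  rcases mul_eq_zero.mp hr with h | h
  · exact Or.inl (by linear_combination pow_eq_zero_iff two_ne_zero |>.mp h)
  · exact Or.inr (Set.mem_singleton_iff.mpr (by linear_combination h))

lemma numEig_witnessMatrix_le : numEig (witnessMatrix k) ≤ 3 := by
  have hsub : spectrum ℝ (witnessMatrix k) ⊆ ↑({0, -2, 2 * (k : ℝ) + 4} : Finset ℝ) := by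
    push_cast
    refine (Matrix.spectrum_mul_subset_insert_zero _ _).trans (Set.insert_subset_insert ?_)
    rw [Matrix.mul_assoc]
    exact spectrum_witnessCore_mul_gram k
  exact (Set.ncard_le_ncard hsub (Finset.finite_toSet _)).trans
    ((Set.ncard_coe_finset _).trans_le Finset.card_le_three)

lemma witnessMatrix_isSymm : (witnessMatrix k).IsSymm := by
  have hC : (witnessCore k)ᵀ = witnessCore k := by
    ext a b
    fin_cases a <;> fin_cases b <;> rfl
  rw [IsSymm, witnessMatrix, transpose_mul, transpose_mul, transpose_transpose, hC,
    Matrix.mul_assoc]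

lemma witnessMatrix_ne_zero_iff {i j : Fin (k + 3)} (hij : i ≠ j) :
    witnessMatrix k i j ≠ 0 ↔ i.val = k + 2 ∨ j.val = k + 2 ∨ (i.val ≤ 1 ∧ j.val ≤ 1) := by
  rw [Ne, Fin.ext_iff] at hij
  simp [witnessMatrix, witnessCore, witnessRows, Matrix.mul_apply, Fin.sum_univ_three,
    Pi.single_apply]
  simp only [Fin.ext_iff, Fin.val_zero, Fin.val_one, Fin.val_last]
  split_ifs <;> norm_num <;> omega

end Witness

theorem qGraph_eq_three_of_adj_iff (k n : ℕ) (hk : 1 ≤ k) (hn : n = k + 3)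
    (G : SimpleGraph (Fin n))
    (hG : ∀ i j, G.Adj i j ↔ i ≠ j ∧ (i.val = k + 2 ∨ j.val = k + 2 ∨ (i.val ≤ 1 ∧ j.val ≤ 1))) :
    qGraph G = 3 := by
  subst hn
  refine qGraph_eq_of_attained_lower_bound ⟨witnessMatrix k, ⟨witnessMatrix_isSymm k, ?_⟩,
    numEig_witnessMatrix_le k⟩ fun B hB => ?_
  · intro i j hij
    rw [witnessMatrix_ne_zero_iff k hij, hG, and_iff_right hij]
  · refine three_le_numEig_of_unique_common_neighbor hB (i := 0) (j := ⟨2, by omega⟩)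
      (l := Fin.last _) ?_ ?_ ?_ ?_ fun m => ?_ <;>
      simp only [hG, ne_eq, Fin.ext_iff, Fin.val_zero, Fin.val_last, true_or, or_true,
        and_true] <;>
      omega

lemma creationSeq_getElem_eq_true_iff (k m : ℕ)
    (hm : m < ([false, true] ++ List.replicate k false ++ [true]).length) :
    ([false, true] ++ List.replicate k false ++ [true])[m] = true ↔ m = 1 ∨ m = k + 2 := by
  rcases m with _ | _ | m
  · simp
  · simp
  · simp only [List.length_append, List.length_cons, List.length_nil, List.length_replicate] at hm
    simp [List.getElem_append, List.getElem_replicate]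
    omega

lemma thresholdOfList_creationSeq_adj_iff (k : ℕ)
    (i j : Fin ([false, true] ++ List.replicate k false ++ [true]).length) :
    (thresholdOfList ([false, true] ++ List.replicate k false ++ [true])).Adj i j ↔
      i ≠ j ∧ (i.val = k + 2 ∨ j.val = k + 2 ∨ (i.val ≤ 1 ∧ j.val ≤ 1)) := by
  have hi := i.isLt
  have hj := j.isLt
  simp only [List.length_append, List.length_cons, List.length_nil, List.length_replicate]
    at hi hj
  simp only [thresholdOfList, List.get_eq_getElem, creationSeq_getElem_eq_true_iff, ne_eq,
    Fin.ext_iff, Fin.lt_def]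
  omega

/-- For `G ≅ (0, 1, 0^{k}, 1)` with `k ≥ 1`, `q(G) = 3`. -/
theorem stmt7 (k : ℕ) (hk : 1 ≤ k) :
    qGraph (thresholdOfList ([false, true] ++ List.replicate k false ++ [true])) = 3 :=
  qGraph_eq_three_of_adj_iff k _ hk (by simp) _ (thresholdOfList_creationSeq_adj_iff k)
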